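/- Let δ > 0 and u > 0, and suppose log(p₀/p_∞) + ((5+δ)/2)·log(T_∞/T₀) + ((5+δ)/2)·(1 − (1 + M_∞²/(3+δ))·(T_∞/T₀)) ≥ 0, where p₀, p_∞, T₀, T_∞ > 0 and M_∞ ∈ ℝ. Then p_∞/p₀ ≤ (1 + M_∞²/(3+δ))^{−(5+δ)/2}. -/

import Mathlib

/-! The map `x ↦ x ^ a * exp (a * (1 - x))` is maximised at `x = 1`; in logarithmic form this is
`log x ≤ x - 1`. Applied to `x = c * t` with `c = 1 + M∞² / (3 + δ)` and `t = T∞ / T₀`, it removes the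
temperature from the hypothesis and leaves `a * log c ≤ log (p₀ / p∞)` with `a = (5 + δ) / 2`. -/

open Real

theorem Real.log_add_one_sub_mul_le_neg_log {c t : ℝ} (hc : 0 < c) (ht : 0 < t) :
    log t + (1 - c * t) ≤ -log c := by
  have hlog := log_le_sub_one_of_pos (mul_pos hc ht)
  rw [log_mul hc.ne' ht.ne'] at hlog
  linarith

theorem Real.rpow_le_of_log_add_mul_log_add_mul_one_sub_nonneg {a c q t : ℝ} (ha : 0 ≤ a)
    (hc : 0 < c) (hq : 0 < q) (ht : 0 < t)
    (h : 0 ≤ log q + a * log t + a * (1 - c * t)) :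
    c ^ a ≤ q := by
  rw [← log_le_log_iff (rpow_pos_of_pos hc a) hq, log_rpow hc]
  nlinarith [mul_le_mul_of_nonneg_left (log_add_one_sub_mul_le_neg_log hc ht) ha]

theorem evaporation_third_condition
    (δ p₀ pinf T₀ Tinf Minf : ℝ)
    (hδ : 0 < δ)
    (hp₀ : 0 < p₀) (hpinf : 0 < pinf) (hT₀ : 0 < T₀) (hTinf : 0 < Tinf)
    (hineq : 0 ≤ Real.log (p₀ / pinf) + (5 + δ) / 2 * Real.log (Tinf / T₀)
      + (5 + δ) / 2 * (1 - (1 + Minf ^ 2 / (3 + δ)) * (Tinf / T₀))) :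
    pinf / p₀ ≤ (1 + Minf ^ 2 / (3 + δ)) ^ (-(5 + δ) / 2) := by
  have hc : 0 < 1 + Minf ^ 2 / (3 + δ) := by positivity
  have hpow : (1 + Minf ^ 2 / (3 + δ)) ^ ((5 + δ) / 2) ≤ p₀ / pinf :=
    rpow_le_of_log_add_mul_log_add_mul_one_sub_nonneg (by positivity) hc
      (div_pos hp₀ hpinf) (div_pos hTinf hT₀) hineq
  calc pinf / p₀ = (p₀ / pinf)⁻¹ := (inv_div _ _).symm
    _ ≤ ((1 + Minf ^ 2 / (3 + δ)) ^ ((5 + δ) / 2))⁻¹ := inv_anti₀ (rpow_pos_of_pos hc _) hpow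
    _ = (1 + Minf ^ 2 / (3 + δ)) ^ (-(5 + δ) / 2) := by rw [← rpow_neg hc.le, neg_div]
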